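/- arXiv:0910.3740 — 3 statements merged into one kernel-verified Lean document; each statement's English description precedes it below -/
import Mathlib

section
/- Let ρ be a density matrix and ε > 0. There exists a unit vector ψ such that the trace norm ‖ρ − |ψ⟩⟨ψ|‖₁ ≤ ε if and only if ‖ρ‖∞ ≥ 1 − ε/2. -/
open Matrix BigOperators
open scoped ComplexOrder

/-- The largest eigenvalue of a Hermitian matrix (0 if not Hermitian). -/
noncomputable def specMax {n : Type*} [Fintype n] [DecidableEq n]
    (M : Matrix n n ℂ) : ℝ :=
  if h : M.IsHermitian then ⨆ i, h.eigenvalues i else 0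

/-- The trace norm: the sum of the singular values. -/
noncomputable def traceNorm {m n : Type*} [Fintype m] [Fintype n] [DecidableEq n]
    (X : Matrix m n ℂ) : ℝ :=
  ∑ i, Real.sqrt ((Matrix.posSemidef_conjTranspose_mul_self X).1.eigenvalues i)

/-!
For a unit vector `ψ`, the Hermitian matrix `A = ρ - |ψ⟩⟨ψ|` has trace zero, so its negative
eigenvalues sum to `-‖A‖₁ / 2`; hence `A ≥ -‖A‖₁ / 2` in the Loewner order, and evaluating at `ψ`
gives `⟨ψ, ρ ψ⟩ - 1 ≥ -‖A‖₁ / 2`, while `⟨ψ, ρ ψ⟩ ≤ ‖ρ‖∞`.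
Conversely, if `ψ` is an eigenvector for the top eigenvalue `λ`, then `ρ - |ψ⟩⟨ψ|` is diagonal in
an eigenbasis of `ρ`, with entries the eigenvalues of `ρ` except `λ - 1` in place of `λ`, so its
trace norm is `(1 - λ) + (1 - λ)`.
-/

open Polynomial Unitary
open scoped MatrixOrder

lemma sub_sum_abs_div_two_le {ι : Type*} [Fintype ι] (d : ι → ℝ) (j : ι) :
    (∑ i, d i - ∑ i, |d i|) / 2 ≤ d j := by
  have hj : (|d j| - d j) / 2 ≤ ∑ i, (|d i| - d i) / 2 :=
    Finset.single_le_sum (f := fun i => (|d i| - d i) / 2)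
      (fun i _ => by linarith [le_abs_self (d i)]) (Finset.mem_univ j)
  rw [← Finset.sum_div, Finset.sum_sub_distrib] at hj
  linarith [neg_abs_le (d j)]

lemma sum_abs_sub_single_eq {ι : Type*} [Fintype ι] [DecidableEq ι] {p : ι → ℝ}
    (hp : ∀ i, 0 ≤ p i) (hsum : ∑ i, p i = 1) (j : ι) :
    ∑ i, |(p - Pi.single j 1 : ι → ℝ) i| = 2 * (1 - p j) := by
  simp only [Pi.sub_apply]
  rw [Fintype.sum_eq_add_sum_compl j] at hsum ⊢
  have hrest : ∑ i ∈ {j}ᶜ, |p i - (Pi.single j 1 : ι → ℝ) i| = ∑ i ∈ {j}ᶜ, p i :=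
    Finset.sum_congr rfl fun i hi => by
      rw [Pi.single_eq_of_ne (by simpa using hi), sub_zero, abs_of_nonneg (hp i)]
  have hpj : p j ≤ 1 := by linarith [Finset.sum_nonneg fun i (_ : i ∈ ({j}ᶜ : Finset ι)) => hp i]
  rw [hrest, Pi.single_eq_same, abs_of_nonpos (by linarith)]
  linarith

namespace Matrix

variable {𝕜 n : Type*} [RCLike 𝕜] [Fintype n]

lemma star_dotProduct_self_eq (x : n → 𝕜) : star x ⬝ᵥ x = ((∑ i, ‖x i‖ ^ 2 : ℝ) : 𝕜) := by
  simp [dotProduct, RCLike.conj_mul]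

variable [DecidableEq n]

lemma charpoly_conjStarAlgAut (U : unitaryGroup n 𝕜) (M : Matrix n n 𝕜) :
    (conjStarAlgAut 𝕜 _ U M).charpoly = M.charpoly := by
  rw [conjStarAlgAut_apply, charpoly_mul_comm, ← Matrix.mul_assoc, coe_star_mul_self,
    Matrix.one_mul]

lemma conjStarAlgAut_diagonal_single (U : unitaryGroup n 𝕜) (i : n) :
    conjStarAlgAut 𝕜 _ U (diagonal (Pi.single i 1)) =
      vecMulVec ((U : Matrix n n 𝕜).col i) (star ((U : Matrix n n 𝕜).col i)) := by
  rw [conjStarAlgAut_apply, diagonal_single, single_eq_single_vecMulVec_single, mul_vecMulVec,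
    vecMulVec_mul]
  congr 1
  · ext j; simp
  · ext j; simp

namespace IsHermitian

variable {A : Matrix n n 𝕜} (hA : A.IsHermitian)
include hA

lemma re_trace_eq_sum_eigenvalues : RCLike.re A.trace = ∑ i, hA.eigenvalues i := by
  simp [hA.trace_eq_sum_eigenvalues]

lemma sum_comp_eigenvalues_of_charpoly_eq {d : n → ℝ} (h : A.charpoly = ∏ i, (X - C (d i : 𝕜)))
    (g : ℝ → ℝ) : ∑ i, g (hA.eigenvalues i) = ∑ i, g (d i) := by
  have hroots : Finset.univ.val.map (RCLike.ofReal ∘ hA.eigenvalues) =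
      Finset.univ.val.map (RCLike.ofReal ∘ d : n → 𝕜) := by
    rw [← hA.roots_charpoly_eq_eigenvalues, h, Finset.prod_eq_multiset_prod]
    simpa [Multiset.map_map, Function.comp_def] using
      roots_multiset_prod_X_sub_C (Finset.univ.val.map (RCLike.ofReal ∘ d : n → 𝕜))
  rw [← Multiset.map_map, ← Multiset.map_map (g := RCLike.ofReal)] at hroots
  have := congrArg (fun s => (s.map g).sum) (Multiset.map_injective RCLike.ofReal_injective hroots)
  simpa [Multiset.map_map] using this

lemma re_dotProduct_mulVec_le {c : ℝ} (hc : ∀ i, hA.eigenvalues i ≤ c) (x : n → 𝕜) :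
    RCLike.re (star x ⬝ᵥ (A *ᵥ x)) ≤ c * RCLike.re (star x ⬝ᵥ x) := by
  have hle : A ≤ algebraMap ℝ _ c := by
    rw [le_algebraMap_iff_spectrum_le hA.isSelfAdjoint, hA.spectrum_real_eq_range_eigenvalues]
    rintro _ ⟨i, rfl⟩
    exact hc i
  have := (RCLike.nonneg_iff.mp ((Matrix.le_iff.mp hle).dotProduct_mulVec_nonneg x)).1
  simpa [algebraMap_eq_diagonal, sub_mulVec, Algebra.algebraMap_eq_smul_one, smul_mulVec,
    RCLike.smul_re] using this

lemma le_re_dotProduct_mulVec {c : ℝ} (hc : ∀ i, c ≤ hA.eigenvalues i) (x : n → 𝕜) :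
    c * RCLike.re (star x ⬝ᵥ x) ≤ RCLike.re (star x ⬝ᵥ (A *ᵥ x)) := by
  have hle : algebraMap ℝ _ c ≤ A := by
    rw [algebraMap_le_iff_le_spectrum hA.isSelfAdjoint, hA.spectrum_real_eq_range_eigenvalues]
    rintro _ ⟨i, rfl⟩
    exact hc i
  have := (RCLike.nonneg_iff.mp ((Matrix.le_iff.mp hle).dotProduct_mulVec_nonneg x)).1
  simpa [algebraMap_eq_diagonal, sub_mulVec, Algebra.algebraMap_eq_smul_one, smul_mulVec,
    RCLike.smul_re] using this

lemma sub_vecMulVec_eigenvectorBasis (i : n) :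
    A - vecMulVec (hA.eigenvectorBasis i).ofLp (star (hA.eigenvectorBasis i).ofLp) =
      conjStarAlgAut 𝕜 _ hA.eigenvectorUnitary
        (diagonal (RCLike.ofReal ∘ (hA.eigenvalues - Pi.single i 1))) := by
  rw [← hA.eigenvectorUnitary_col_eq, ← conjStarAlgAut_diagonal_single]
  nth_rewrite 1 [hA.spectral_theorem]
  rw [← map_sub, diagonal_sub]
  congr 2
  ext j
  by_cases hj : j = i
  · subst hj; simp
  · simp [hj]

end IsHermitian

end Matrix

section TraceNorm

variable {n : Type*} [Fintype n] [DecidableEq n]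

lemma traceNorm_conjStarAlgAut_diagonal (U : unitaryGroup n ℂ) (d : n → ℝ) :
    traceNorm (conjStarAlgAut ℂ _ U (diagonal (RCLike.ofReal ∘ d))) = ∑ i, |d i| := by
  set M := conjStarAlgAut ℂ _ U (diagonal (RCLike.ofReal ∘ d))
  have hM : Mᴴ * M = conjStarAlgAut ℂ _ U (diagonal (RCLike.ofReal ∘ fun i => d i ^ 2)) := by
    rw [← star_eq_conjTranspose, ← map_star, ← map_mul, star_eq_conjTranspose,
      diagonal_conjTranspose, diagonal_mul_diagonal]
    congr 2; ext i; simp [sq]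
  have hchar : (Mᴴ * M).charpoly = ∏ i, (X - C ((d i ^ 2 : ℝ) : ℂ)) := by
    rw [hM, charpoly_conjStarAlgAut, charpoly_diagonal]; rfl
  unfold traceNorm
  rw [IsHermitian.sum_comp_eigenvalues_of_charpoly_eq _ hchar]
  exact Finset.sum_congr rfl fun i _ => Real.sqrt_sq_eq_abs (d i)

namespace Matrix.IsHermitian

lemma traceNorm_eq_sum_abs_eigenvalues {A : Matrix n n ℂ} (hA : A.IsHermitian) :
    traceNorm A = ∑ i, |hA.eigenvalues i| := by
  conv_lhs => rw [hA.spectral_theorem]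
  exact traceNorm_conjStarAlgAut_diagonal _ _

lemma re_trace_sub_traceNorm_le {A : Matrix n n ℂ} (hA : A.IsHermitian) {x : n → ℂ}
    (hx : star x ⬝ᵥ x = 1) : (A.trace.re - traceNorm A) / 2 ≤ (star x ⬝ᵥ (A *ᵥ x)).re := by
  have := hA.le_re_dotProduct_mulVec (sub_sum_abs_div_two_le hA.eigenvalues) x
  rw [← hA.re_trace_eq_sum_eigenvalues, ← hA.traceNorm_eq_sum_abs_eigenvalues] at this
  simpa [hx] using this

lemma one_sub_half_traceNorm_sub_vecMulVec_le {ρ : Matrix n n ℂ} (hρ : ρ.IsHermitian)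
    (htr : ρ.trace = 1) {ψ : n → ℂ} (hψ : star ψ ⬝ᵥ ψ = 1) :
    1 - traceNorm (ρ - vecMulVec ψ (star ψ)) / 2 ≤ ⨆ i, hρ.eigenvalues i := by
  have hdiff := (hρ.sub (posSemidef_vecMulVec_self_star ψ).1).re_trace_sub_traceNorm_le hψ
  have hmax := hρ.re_dotProduct_mulVec_le (le_ciSup (Set.finite_range _).bddAbove) ψ
  rw [trace_sub, htr, trace_vecMulVec, sub_mulVec, dotProduct_sub, vecMulVec_mulVec] at hdiff
  simp only [dotProduct_comm ψ, hψ, op_smul_eq_smul, dotProduct_smul, smul_eq_mul, mul_one,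
    Complex.sub_re, Complex.one_re, sub_self, Complex.zero_re] at hdiff
  simp only [hψ, RCLike.one_re, mul_one, RCLike.re_to_complex] at hmax
  linarith

end Matrix.IsHermitian

lemma Matrix.PosSemidef.traceNorm_sub_vecMulVec_eigenvectorBasis {ρ : Matrix n n ℂ}
    (hρ : ρ.PosSemidef) (htr : ρ.trace = 1) (i : n) :
    traceNorm (ρ - vecMulVec (hρ.1.eigenvectorBasis i).ofLp (star (hρ.1.eigenvectorBasis i).ofLp))
      = 2 * (1 - hρ.1.eigenvalues i) := by
  have hsum : ∑ j, hρ.1.eigenvalues j = 1 := by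
    simpa [htr] using hρ.1.re_trace_eq_sum_eigenvalues.symm
  rw [hρ.1.sub_vecMulVec_eigenvectorBasis, traceNorm_conjStarAlgAut_diagonal,
    sum_abs_sub_single_eq hρ.eigenvalues_nonneg hsum]

end TraceNorm

theorem exists_pure_close_iff_specMax_large_general {n : Type*} [Fintype n] [DecidableEq n] [Nonempty n]
    (ρ : Matrix n n ℂ) (hρ : ρ.PosSemidef) (htr : ρ.trace = 1) (ε : ℝ) :
    (∃ ψ : n → ℂ, (∑ i, ‖ψ i‖ ^ 2 = 1) ∧
        traceNorm (ρ - Matrix.vecMulVec ψ (star ψ)) ≤ ε) ↔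
      specMax ρ ≥ 1 - ε / 2 := by
  rw [specMax, dif_pos hρ.1, ge_iff_le]
  constructor
  · rintro ⟨ψ, hψ, hclose⟩
    have hunit : star ψ ⬝ᵥ ψ = 1 := by rw [star_dotProduct_self_eq, hψ, RCLike.ofReal_one]
    linarith [hρ.1.one_sub_half_traceNorm_sub_vecMulVec_le htr hunit]
  · intro hlarge
    obtain ⟨i, hi⟩ := exists_eq_ciSup_of_finite (f := hρ.1.eigenvalues)
    refine ⟨(hρ.1.eigenvectorBasis i).ofLp, ?_, ?_⟩
    · have hnorm := hρ.1.eigenvectorBasis.orthonormal.1 i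
      rwa [EuclideanSpace.norm_eq, Real.sqrt_eq_one] at hnorm
    · rw [hρ.traceNorm_sub_vecMulVec_eigenvectorBasis htr i]
      linarith

/-- There is a unit vector ψ with ‖ρ − |ψ⟩⟨ψ|‖₁ ≤ ε iff ‖ρ‖∞ ≥ 1 − ε/2. -/
theorem exists_pure_close_iff_specMax_large {n : Type*} [Fintype n] [DecidableEq n] [Nonempty n]
    (ρ : Matrix n n ℂ) (hρ : ρ.PosSemidef) (htr : ρ.trace = 1) (ε : ℝ) (hε : 0 < ε) :
    (∃ ψ : n → ℂ, (∑ i, ‖ψ i‖ ^ 2 = 1) ∧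
        traceNorm (ρ - Matrix.vecMulVec ψ (star ψ)) ≤ ε) ↔
      specMax ρ ≥ 1 - ε / 2 :=
  exists_pure_close_iff_specMax_large_general ρ hρ htr ε
end

section
/- If Φ is a quantum channel from H to K such that Φ ⊗ id_H is rank non-increasing (i.e., rank((Φ ⊗ id_H)(ρ)) ≤ rank(ρ) for all density matrices ρ on H ⊗ H), then there exists a single Kraus operator A with A*A = I_H such that Φ(ρ) = AρA* for all ρ. -/
/-!
The Choi matrix `C = ∑ E_ab ⊗ Φ(E_ab)` of `Φ` is, up to the factor `d`, the image under `Φ ⊗ id`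
of the maximally entangled pure state. Complete positivity makes `C` positive semidefinite and
the rank hypothesis forces `rank C ≤ 1`, so `C = v v*`. Reading `v` as a `k × d` matrix `A` gives
`Φ(E_ab) = A E_ab A*`, hence `Φ = A · A*` by linearity, and trace preservation becomes `A*A = 1`.
-/

open Matrix BigOperators
open scoped ComplexOrder

/-- The map Φ ⊗ id acting on block matrices: apply Φ to the first tensor factor. -/
def tensorMapId {m k n : Type*}
    (Φ : Matrix m m ℂ → Matrix k k ℂ)
    (M : Matrix (m × n) (m × n) ℂ) : Matrix (k × n) (k × n) ℂ :=
  Matrix.of fun p q => Φ (Matrix.of fun a b => M (a, p.2) (b, q.2)) p.1 q.1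

/-- Complete positivity of a map on matrices. -/
def IsCompletelyPositive {m k : Type*} [Fintype m] [Fintype k]
    (Φ : Matrix m m ℂ → Matrix k k ℂ) : Prop :=
  ∀ (n : ℕ) (M : Matrix (m × Fin n) (m × Fin n) ℂ),
    M.PosSemidef → (tensorMapId Φ M).PosSemidef

theorem Matrix.PosSemidef.exists_eq_vecMulVec_of_rank_le_one {𝕜 n : Type*} [RCLike 𝕜]
    [Fintype n] [DecidableEq n] {M : Matrix n n 𝕜} (hM : M.PosSemidef) (h : M.rank ≤ 1) :
    ∃ v : n → 𝕜, M = vecMulVec v (star v) := by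
  set hH := hM.isHermitian
  have hsingle : ∀ i j, hH.eigenvalues i ≠ 0 → hH.eigenvalues j ≠ 0 → i = j := by
    rw [hH.rank_eq_card_non_zero_eigs, Fintype.card_le_one_iff] at h
    exact fun i j hi hj => congrArg Subtype.val (h ⟨i, hi⟩ ⟨j, hj⟩)
  set w : n → 𝕜 := fun i => (√(hH.eigenvalues i) : 𝕜)
  have hdiag : diagonal (RCLike.ofReal ∘ hH.eigenvalues) = vecMulVec w (star w) := by
    ext i j
    rcases eq_or_ne i j with rfl | hij
    · simp [w, vecMulVec_apply, ← RCLike.ofReal_mul, Real.mul_self_sqrt (hM.eigenvalues_nonneg i)]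
    · by_cases hi : hH.eigenvalues i = 0
      · simp [w, vecMulVec_apply, hij, hi]
      · simp [w, vecMulVec_apply, hij, not_imp_comm.mp (hsingle i j hi) hij]
  refine ⟨(hH.eigenvectorUnitary : Matrix n n 𝕜) *ᵥ w, ?_⟩
  conv_lhs => rw [hH.spectral_theorem, Unitary.conjStarAlgAut_apply, hdiag]
  rw [mul_vecMulVec, vecMulVec_mul, star_mulVec, star_eq_conjTranspose]

theorem Matrix.conjTranspose_mul_self_eq_one_of_trace_conj {R m n : Type*} [CommSemiring R]
    [StarRing R] [Fintype m] [Fintype n] [DecidableEq n] {A : Matrix m n R}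
    (h : ∀ ρ : Matrix n n R, (A * ρ * Aᴴ).trace = ρ.trace) : Aᴴ * A = 1 := by
  refine ext_iff_trace_mul_right.mpr fun ρ => ?_
  rw [Matrix.one_mul, ← h ρ, Matrix.mul_assoc, trace_mul_comm, Matrix.mul_assoc]

theorem tensorMapId_smul {m k n : Type*} (Φ : Matrix m m ℂ →ₗ[ℂ] Matrix k k ℂ) (c : ℂ)
    (M : Matrix (m × n) (m × n) ℂ) : tensorMapId Φ (c • M) = c • tensorMapId Φ M := by
  ext p q
  change Φ (c • of fun a b => M (a, p.2) (b, q.2)) p.1 q.1 = c • Φ _ p.1 q.1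
  rw [map_smul, Matrix.smul_apply]

section Choi

variable {m k : Type*} [DecidableEq m]

def choiMatrix (Φ : Matrix m m ℂ → Matrix k k ℂ) : Matrix (k × m) (k × m) ℂ :=
  of fun p q => Φ (single p.2 q.2 1) p.1 q.1

/-- Unnormalized: `∑ₐ eₐ ⊗ eₐ`. -/
def maxEntangledVec (m : Type*) [DecidableEq m] : m × m → ℂ :=
  fun p => (1 : Matrix m m ℂ) p.1 p.2

abbrev maxEntangled (m : Type*) [DecidableEq m] : Matrix (m × m) (m × m) ℂ :=
  vecMulVec (maxEntangledVec m) (star (maxEntangledVec m))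

theorem trace_maxEntangled [Fintype m] : (maxEntangled m).trace = Fintype.card m := by
  simp [trace, vecMulVec_apply, maxEntangledVec, Fintype.sum_prod_type, one_apply]

theorem tensorMapId_maxEntangled (Φ : Matrix m m ℂ → Matrix k k ℂ) :
    tensorMapId Φ (maxEntangled m) = choiMatrix Φ := by
  ext p q
  simp only [tensorMapId, choiMatrix, of_apply]
  congr 2
  ext a b
  by_cases ha : a = p.2 <;> by_cases hb : b = q.2 <;>
    simp [maxEntangledVec, vecMulVec_apply, one_apply, ha, hb, eq_comm]

theorem choiMatrix_posSemidef {d : ℕ} [Fintype k] {Φ : Matrix (Fin d) (Fin d) ℂ → Matrix k k ℂ}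
    (hΦ : IsCompletelyPositive Φ) : (choiMatrix Φ).PosSemidef :=
  tensorMapId_maxEntangled Φ ▸ hΦ d _ (posSemidef_vecMulVec_self_star _)

theorem choiMatrix_rank_le_one [Fintype m] [Fintype k] (Φ : Matrix m m ℂ →ₗ[ℂ] Matrix k k ℂ)
    (hrank : ∀ M : Matrix (m × m) (m × m) ℂ,
      M.PosSemidef → M.trace = 1 → (tensorMapId ⇑Φ M).rank ≤ M.rank) :
    (choiMatrix Φ).rank ≤ 1 := by
  cases isEmpty_or_nonempty m
  · exact (rank_le_card_width (choiMatrix Φ)).trans (by simp)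
  have hcard : (Fintype.card m : ℂ) ≠ 0 := Nat.cast_ne_zero.mpr Fintype.card_ne_zero
  set c : ℂ := (Fintype.card m : ℂ)⁻¹
  have hc : c ≠ 0 := inv_ne_zero hcard
  have hstate : (c • maxEntangled m).PosSemidef ∧ (c • maxEntangled m).trace = 1 := by
    refine ⟨(posSemidef_vecMulVec_self_star _).smul (by positivity), ?_⟩
    rw [trace_smul, trace_maxEntangled, smul_eq_mul, inv_mul_cancel₀ hcard]
  calc (choiMatrix Φ).rank
      = (tensorMapId Φ (c • maxEntangled m)).rank := by
        rw [tensorMapId_smul, tensorMapId_maxEntangled,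
          rank_smul_of_mem_nonZeroDivisors _ (mem_nonZeroDivisors_of_ne_zero hc)]
    _ ≤ (c • maxEntangled m).rank := hrank _ hstate.1 hstate.2
    _ ≤ 1 := (rank_smul_of_mem_nonZeroDivisors _ (mem_nonZeroDivisors_of_ne_zero hc)).trans_le
        (rank_vecMulVec_le _ _)

theorem eq_conj_of_choiMatrix_eq_vecMulVec [Fintype m] [Fintype k]
    {Φ : Matrix m m ℂ →ₗ[ℂ] Matrix k k ℂ} {v : k × m → ℂ}
    (hv : choiMatrix Φ = vecMulVec v (star v)) (ρ : Matrix m m ℂ) :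
    Φ ρ = of (Function.curry v) * ρ * (of (Function.curry v))ᴴ := by
  set A : Matrix k m ℂ := of (Function.curry v)
  suffices Φ = mulRightLinearMap k ℂ Aᴴ ∘ₗ mulLeftLinearMap m ℂ A from
    LinearMap.congr_fun this ρ
  refine ext_linearMap ℂ fun a b => LinearMap.ext_ring ?_
  ext i j
  have hentry := congr_fun₂ hv (i, a) (j, b)
  simp only [choiMatrix, of_apply, vecMulVec_apply, Pi.star_apply] at hentry
  simp only [LinearMap.comp_apply, singleLinearMap_apply, hentry]
  simp [A, single_eq_single_vecMulVec_single, mul_vecMulVec, vecMulVec_mul,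
    vecMulVec_apply]

end Choi

/-- If Φ ⊗ id_H is rank non-increasing on density matrices, then Φ is conjugation by a
single Kraus operator A with A*A = I, i.e. Φ is an isometry channel. -/
theorem rank_nonincreasing_implies_isometry {d k : ℕ}
    (Φ : Matrix (Fin d) (Fin d) ℂ →ₗ[ℂ] Matrix (Fin k) (Fin k) ℂ)
    (hCP : IsCompletelyPositive ⇑Φ)
    (hTP : ∀ X : Matrix (Fin d) (Fin d) ℂ, (Φ X).trace = X.trace)
    (hrank : ∀ M : Matrix (Fin d × Fin d) (Fin d × Fin d) ℂ,
      M.PosSemidef → M.trace = 1 → (tensorMapId ⇑Φ M).rank ≤ M.rank) :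
    ∃ A : Matrix (Fin k) (Fin d) ℂ, Aᴴ * A = 1 ∧
      ∀ ρ : Matrix (Fin d) (Fin d) ℂ, Φ ρ = A * ρ * Aᴴ := by
  obtain ⟨v, hv⟩ :=
    (choiMatrix_posSemidef hCP).exists_eq_vecMulVec_of_rank_le_one (choiMatrix_rank_le_one Φ hrank)
  have hΦ := eq_conj_of_choiMatrix_eq_vecMulVec hv
  exact ⟨_, conjTranspose_mul_self_eq_one_of_trace_conj fun ρ => hΦ ρ ▸ hTP ρ, hΦ⟩
end

section
/- Suppose Φ is a quantum channel and ρ = (1/2)Σ_{a,b∈{i,j}} Φ(|a⟩⟨b|) ⊗ |a⟩⟨b| is the output of Φ ⊗ id on the pure state (|ii⟩ + |jj⟩)/√2 with i ≠ j. If tr(ρ²) ≥ 1 − 2ε, then tr(Φ(|i⟩⟨j|)·Φ(|i⟩⟨j|)*) ≥ 1 − 4ε. -/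
open Matrix BigOperators Kronecker
open scoped ComplexOrder

/-! ρ is half of N = Σ_{a,b ∈ {i,j}} Φ(|a⟩⟨b|) ⊗ |a⟩⟨b| = (Φ ⊗ id)(|ψ⟩⟨ψ|), ψ = |ii⟩ + |jj⟩, so complete
positivity makes N positive semidefinite. Hence its diagonal blocks Φ(|a⟩⟨a|) are density matrices,
of purity at most 1, and its hermiticity gives Φ(|j⟩⟨i|) = Φ(|i⟩⟨j|)*. Since
tr(N²) = Σ_{a,b} tr(Φ(|a⟩⟨b|) Φ(|b⟩⟨a|)), this gives 4 tr(ρ²) ≤ 2 + 2 tr(Φ(|i⟩⟨j|) Φ(|i⟩⟨j|)*). -/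

lemma Matrix.PosSemidef.re_trace_mul_self_le_sq {𝕜 n : Type*} [RCLike 𝕜] [Fintype n]
    {A : Matrix n n 𝕜} (hA : A.PosSemidef) :
    RCLike.re (A * A).trace ≤ RCLike.re A.trace ^ 2 := by
  classical
  have htrace (X : Matrix n n 𝕜) :
      (Unitary.conjStarAlgAut 𝕜 _ hA.1.eigenvectorUnitary X).trace = X.trace := by
    rw [Unitary.conjStarAlgAut_apply, trace_mul_cycle, Unitary.coe_star_mul_self, one_mul]
  rw [hA.1.spectral_theorem, ← map_mul, htrace, htrace, diagonal_mul_diagonal, trace_diagonal,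
    trace_diagonal]
  simp only [Function.comp_apply, ← RCLike.ofReal_mul, ← RCLike.ofReal_sum, RCLike.ofReal_re]
  simpa only [sq] using Finset.sum_sq_le_sq_sum_of_nonneg fun i _ => hA.eigenvalues_nonneg i

section Choi

variable {m n k : Type*}

lemma tensorMapId_sum (Φ : Matrix m m ℂ →ₗ[ℂ] Matrix k k ℂ) {ι : Type*} (s : Finset ι)
    (M : ι → Matrix (m × n) (m × n) ℂ) :
    tensorMapId Φ (∑ i ∈ s, M i) = ∑ i ∈ s, tensorMapId Φ (M i) := by
  ext p q
  have : (of fun a b => (∑ i ∈ s, M i) (a, p.2) (b, q.2)) =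
      ∑ i ∈ s, of fun a b => M i (a, p.2) (b, q.2) := by
    ext a b
    simp only [Matrix.sum_apply, of_apply]
  rw [tensorMapId, of_apply, this, map_sum, Matrix.sum_apply, Matrix.sum_apply]
  rfl

lemma tensorMapId_kronecker (Φ : Matrix m m ℂ →ₗ[ℂ] Matrix k k ℂ) (X : Matrix m m ℂ)
    (Y : Matrix n n ℂ) : tensorMapId Φ (X ⊗ₖ Y) = Φ X ⊗ₖ Y := by
  ext ⟨p, c⟩ ⟨q, c'⟩
  have : (of fun a b => (X ⊗ₖ Y) (a, c) (b, c')) = Y c c' • X := by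
    ext a b
    simp [mul_comm]
  rw [tensorMapId, of_apply, this, map_smul]
  simp [mul_comm]

variable [DecidableEq m]

def choiMatrixOn (Φ : Matrix m m ℂ → Matrix k k ℂ) (S : Finset m) :
    Matrix (k × m) (k × m) ℂ :=
  ∑ a ∈ S, ∑ b ∈ S, Φ (single a b 1) ⊗ₖ single a b 1

lemma choiMatrixOn_submatrix (Φ : Matrix m m ℂ → Matrix k k ℂ) {S : Finset m} {a b : m}
    (ha : a ∈ S) (hb : b ∈ S) :
    (choiMatrixOn Φ S).submatrix (·, a) (·, b) = Φ (single a b 1) := by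
  ext p q
  simp [choiMatrixOn, Matrix.sum_apply, kroneckerMap_apply, single_apply, ite_and, ha, hb]

variable [Fintype m] [Fintype k]

lemma trace_choiMatrixOn_mul_self (Φ : Matrix m m ℂ → Matrix k k ℂ) (S : Finset m) :
    (choiMatrixOn Φ S * choiMatrixOn Φ S).trace =
      ∑ a ∈ S, ∑ b ∈ S, (Φ (single a b 1) * Φ (single b a 1)).trace := by
  simp only [choiMatrixOn, Finset.sum_mul, Finset.mul_sum, ← mul_kronecker_mul, trace_sum,
    trace_kronecker]
  refine Finset.sum_congr rfl fun a ha => Finset.sum_congr rfl fun b hb => ?_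
  simp [trace_single_mul, single_apply, ite_and, ha, hb, trace_mul_comm (Φ (single b a 1))]

end Choi

section CompletelyPositive

variable {d : ℕ} {k : Type*} [Fintype k] {Φ : Matrix (Fin d) (Fin d) ℂ →ₗ[ℂ] Matrix k k ℂ}

lemma IsCompletelyPositive.posSemidef_choiMatrixOn (hΦ : IsCompletelyPositive ⇑Φ)
    (S : Finset (Fin d)) : (choiMatrixOn Φ S).PosSemidef := by
  set ψ : Fin d × Fin d → ℂ := fun x => if x.1 = x.2 ∧ x.2 ∈ S then 1 else 0
  have hψ : vecMulVec ψ (star ψ) = ∑ a ∈ S, ∑ b ∈ S, single a b 1 ⊗ₖ single a b 1 := by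
    ext ⟨x, c⟩ ⟨y, c'⟩
    simp only [ψ, vecMulVec_apply, Pi.star_apply, Matrix.sum_apply, kroneckerMap_apply,
      single_apply, ite_and, mul_ite, ite_mul, one_mul, mul_one, zero_mul, mul_zero, eq_comm,
      Finset.sum_ite_irrel, Finset.sum_ite_eq, Finset.sum_const_zero]
    split_ifs <;> simp_all
  simpa only [choiMatrixOn, hψ, tensorMapId_sum, tensorMapId_kronecker] using
    hΦ d _ (posSemidef_vecMulVec_self_star ψ)

lemma IsCompletelyPositive.posSemidef_map_single (hΦ : IsCompletelyPositive ⇑Φ) (a : Fin d) :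
    (Φ (single a a 1)).PosSemidef := by
  rw [← choiMatrixOn_submatrix Φ (Finset.mem_singleton_self a) (Finset.mem_singleton_self a)]
  exact (hΦ.posSemidef_choiMatrixOn {a}).submatrix _

lemma IsCompletelyPositive.conjTranspose_map_single (hΦ : IsCompletelyPositive ⇑Φ)
    (a b : Fin d) : (Φ (single a b 1))ᴴ = Φ (single b a 1) := by
  have ha : a ∈ ({a, b} : Finset (Fin d)) := by simp
  have hb : b ∈ ({a, b} : Finset (Fin d)) := by simp
  rw [← choiMatrixOn_submatrix Φ ha hb, ← choiMatrixOn_submatrix Φ hb ha, conjTranspose_submatrix,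
    (hΦ.posSemidef_choiMatrixOn {a, b}).isHermitian]

lemma IsCompletelyPositive.re_trace_map_single_mul_self_le_one (hΦ : IsCompletelyPositive ⇑Φ)
    (hTP : ∀ X, (Φ X).trace = X.trace) (a : Fin d) :
    ((Φ (single a a 1) * Φ (single a a 1)).trace).re ≤ 1 := by
  simpa [hTP] using (hΦ.posSemidef_map_single a).re_trace_mul_self_le_sq

end CompletelyPositive

theorem cross_term_large_of_high_purity_general {d k : ℕ}
    (Φ : Matrix (Fin d) (Fin d) ℂ →ₗ[ℂ] Matrix (Fin k) (Fin k) ℂ)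
    (hCP : IsCompletelyPositive ⇑Φ)
    (hTP : ∀ X : Matrix (Fin d) (Fin d) ℂ, (Φ X).trace = X.trace)
    (i j : Fin d) (hij : i ≠ j) (ε : ℝ)
    (ρ : Matrix (Fin k × Fin d) (Fin k × Fin d) ℂ)
    (hρ : ρ = (1 / 2 : ℂ) •
      (Φ (Matrix.single i i 1) ⊗ₖ Matrix.single i i (1 : ℂ) +
       Φ (Matrix.single i j 1) ⊗ₖ Matrix.single i j (1 : ℂ) +
       Φ (Matrix.single j i 1) ⊗ₖ Matrix.single j i (1 : ℂ) +
       Φ (Matrix.single j j 1) ⊗ₖ Matrix.single j j (1 : ℂ)))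
    (hpurity : ((ρ * ρ).trace).re ≥ 1 - 2 * ε) :
    ((Φ (Matrix.single i j 1) * (Φ (Matrix.single i j 1))ᴴ).trace).re ≥
      1 - 4 * ε := by
  have hρ_choi : ρ = (1 / 2 : ℂ) • choiMatrixOn Φ {i, j} := by
    simp only [hρ, choiMatrixOn, Finset.sum_pair hij, add_assoc]
  have hρ_purity : ((ρ * ρ).trace).re =
      (((Φ (single i i 1) * Φ (single i i 1)).trace).re +
        2 * ((Φ (single i j 1) * (Φ (single i j 1))ᴴ).trace).re +
        ((Φ (single j j 1) * Φ (single j j 1)).trace).re) / 4 := by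
    rw [hρ_choi, smul_mul_smul_comm, trace_smul, trace_choiMatrixOn_mul_self]
    simp only [Finset.sum_pair hij, ← hCP.conjTranspose_map_single i j,
      trace_mul_comm (Φ (single i j 1))ᴴ]
    rw [smul_eq_mul, show (1 / 2 : ℂ) * (1 / 2) = ((1 / 4 : ℝ) : ℂ) by norm_num,
      Complex.re_ofReal_mul]
    simp only [Complex.add_re]
    ring
  linarith [hCP.re_trace_map_single_mul_self_le_one hTP i,
    hCP.re_trace_map_single_mul_self_le_one hTP j]

/-- If ρ = (1/2)Σ_{a,b∈{i,j}} Φ(|a⟩⟨b|) ⊗ |a⟩⟨b|, the output of Φ ⊗ id on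
(|ii⟩+|jj⟩)/√2, has purity tr(ρ²) ≥ 1 − 2ε, then tr(Φ(|i⟩⟨j|)Φ(|i⟩⟨j|)*) ≥ 1 − 4ε. -/
theorem cross_term_large_of_high_purity {d k : ℕ}
    (Φ : Matrix (Fin d) (Fin d) ℂ →ₗ[ℂ] Matrix (Fin k) (Fin k) ℂ)
    (hCP : IsCompletelyPositive ⇑Φ)
    (hTP : ∀ X : Matrix (Fin d) (Fin d) ℂ, (Φ X).trace = X.trace)
    (i j : Fin d) (hij : i ≠ j) (ε : ℝ) (hε : 0 ≤ ε)
    (ρ : Matrix (Fin k × Fin d) (Fin k × Fin d) ℂ)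
    (hρ : ρ = (1 / 2 : ℂ) •
      (Φ (Matrix.single i i 1) ⊗ₖ Matrix.single i i (1 : ℂ) +
       Φ (Matrix.single i j 1) ⊗ₖ Matrix.single i j (1 : ℂ) +
       Φ (Matrix.single j i 1) ⊗ₖ Matrix.single j i (1 : ℂ) +
       Φ (Matrix.single j j 1) ⊗ₖ Matrix.single j j (1 : ℂ)))
    (hpurity : ((ρ * ρ).trace).re ≥ 1 - 2 * ε) :
    ((Φ (Matrix.single i j 1) * (Φ (Matrix.single i j 1))ᴴ).trace).re ≥
      1 - 4 * ε :=
  cross_term_large_of_high_purity_general Φ hCP hTP i j hij ε ρ hρ hpurity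
end
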